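/- Let V = ℂ³ with basis e₁, e₂, e₃ and let D₋, D₊ be the derivations of the tensor algebra determined on V by D₋(e₁) = e₂ − i e₃, D₋(e₂) = e₁, D₋(e₃) = −i e₁, and D₊(e₁) = e₂ + i e₃, D₊(e₂) = e₁, D₊(e₃) = i e₁. For 1 ≤ j ≤ b and 1 ≤ k ≤ b−1, let A_{jk} : V^{⊗(b−2)} → V^{⊗b} be the map inserting the tensor θ = e₁⊗e₁ − e₂⊗e₂ − e₃⊗e₃ at the appropriate pair of positions (at the (j, k+1)-th spots if j ≤ k, and the (k, j)-th spots if k < j). Then D₊(D₋(e₁^{⊗b})) = b(b+1)·e₁^{⊗b} − Σ_{j=1}^{b} Σ_{k=1}^{b−1} A_{jk}(e₁^{⊗(b−2)}). -/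

import Mathlib

open scoped TensorProduct

/-- The basis vectors `e₁, e₂, e₃` of `V = ℂ³` (0-indexed). -/
noncomputable def eV3 (s : Fin 3) : Fin 3 → ℂ := Pi.single s 1

/-- `D₋ : V → V`, with `D₋(e₁) = e₂ − i e₃`, `D₋(e₂) = e₁`, `D₋(e₃) = −i e₁`. -/
noncomputable def dMinusV3 : (Fin 3 → ℂ) →ₗ[ℂ] (Fin 3 → ℂ) :=
  Matrix.toLin' !![0, 1, -Complex.I; 1, 0, 0; -Complex.I, 0, 0]

/-- `D₊ : V → V`, with `D₊(e₁) = e₂ + i e₃`, `D₊(e₂) = e₁`, `D₊(e₃) = i e₁`. -/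
noncomputable def dPlusV3 : (Fin 3 → ℂ) →ₗ[ℂ] (Fin 3 → ℂ) :=
  Matrix.toLin' !![0, 1, Complex.I; 1, 0, 0; Complex.I, 0, 0]

/-- The derivation of `V^{⊗b}` determined by a linear endomorphism `d` of `V`
(Leibniz rule: the sum of `d` acting in each tensor factor). -/
noncomputable def derivExt (b : ℕ) (d : (Fin 3 → ℂ) →ₗ[ℂ] (Fin 3 → ℂ)) :
    (⨂[ℂ] _ : Fin b, (Fin 3 → ℂ)) →ₗ[ℂ] ⨂[ℂ] _ : Fin b, (Fin 3 → ℂ) :=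
  ∑ j : Fin b,
    PiTensorProduct.map
      (Function.update (fun _ : Fin b => (LinearMap.id : (Fin 3 → ℂ) →ₗ[ℂ] Fin 3 → ℂ)) j d)

/-- The tensor with `e₁` in every slot except the (0-indexed) positions `p` and `q`,
where the tensor `θ = e₁⊗e₁ − e₂⊗e₂ − e₃⊗e₃` (dual to the signature-(1,2) form) is
inserted; i.e. the value `A_{jk}(e₁^{⊗(b−2)})` of the insertion operator. -/
noncomputable def insertTheta (b : ℕ) (p q : ℕ) : ⨂[ℂ] _ : Fin b, (Fin 3 → ℂ) :=
  (⨂ₜ[ℂ] i : Fin b, if (i : ℕ) = p ∨ (i : ℕ) = q then eV3 0 else eV3 0) -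
    (⨂ₜ[ℂ] i : Fin b, if (i : ℕ) = p ∨ (i : ℕ) = q then eV3 1 else eV3 0) -
    (⨂ₜ[ℂ] i : Fin b, if (i : ℕ) = p ∨ (i : ℕ) = q then eV3 2 else eV3 0)

/-!
By the Leibniz rule applied twice, `D₊D₋(e₁^{⊗b})` is the sum over the slots `j` of `e₁^{⊗b}`
with `D₊D₋e₁ = 2e₁` in slot `j`, plus the sum over ordered pairs `j ≠ k` of `e₁^{⊗b}` with
`D₋e₁ = e₂ − i e₃` in slot `j` and `D₊e₁ = e₂ + i e₃` in slot `k`. Expanding the latter,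
the mixed terms `± i (e₂ ⊗ e₃ − e₃ ⊗ e₂)` cancel in the sum over ordered pairs, and what remains
at each pair is `e₂ ⊗ e₂ + e₃ ⊗ e₃ = e₁ ⊗ e₁ − θ`. Hence
`D₊D₋(e₁^{⊗b}) = (2b + b(b − 1)) e₁^{⊗b} − Σ_{j ≠ k} θ_{jk}`, and the pairs `(j, k)` of the
statement enumerate the ordered pairs of distinct slots.
-/

open Function Finset

theorem Finset.sum_Icc_one_eq_sum_fin {M : Type*} [AddCommMonoid M] (n : ℕ) (f : ℕ → M) :
    ∑ i ∈ Icc 1 n, f i = ∑ i : Fin n, f (i + 1) := by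
  rw [Fin.sum_univ_eq_sum_range (fun i => f (i + 1)), ← Ico_add_one_right_eq_Icc,
    sum_Ico_eq_sum_range]
  simp only [Nat.add_sub_cancel, add_comm 1]

theorem Finset.sum_sum_erase_swap {ι M : Type*} [DecidableEq ι] [AddCommMonoid M]
    (s : Finset ι) (f : ι → ι → M) :
    ∑ j ∈ s, ∑ k ∈ s.erase j, f j k = ∑ j ∈ s, ∑ k ∈ s.erase j, f k j :=
  sum_comm' fun j k => by simp only [mem_erase]; tauto

theorem Fin.sum_univ_succAbove_eq_sum_erase {M : Type*} [AddCommMonoid M] {n : ℕ}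
    (f : Fin (n + 1) → M) (p : Fin (n + 1)) :
    ∑ i : Fin n, f (p.succAbove i) = ∑ k ∈ univ.erase p, f k := by
  rw [← compl_singleton, ← Fin.image_succAbove_univ,
    sum_image fun _ _ _ _ h => Fin.succAbove_right_injective h]

theorem derivExt_tprod (b : ℕ) (d : (Fin 3 → ℂ) →ₗ[ℂ] (Fin 3 → ℂ)) (c : Fin b → (Fin 3 → ℂ)) :
    derivExt b d (PiTensorProduct.tprod ℂ c) =
      ∑ j, PiTensorProduct.tprod ℂ (update c j (d (c j))) := by
  simp only [derivExt, LinearMap.sum_apply, PiTensorProduct.map_tprod]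
  refine sum_congr rfl fun j _ => congrArg _ (funext fun i => ?_)
  rcases eq_or_ne i j with rfl | h
  · simp
  · simp [update_of_ne h]

theorem derivExt_derivExt_tprod (b : ℕ) (d₁ d₂ : (Fin 3 → ℂ) →ₗ[ℂ] (Fin 3 → ℂ))
    (c : Fin b → (Fin 3 → ℂ)) :
    derivExt b d₂ (derivExt b d₁ (PiTensorProduct.tprod ℂ c)) =
      ∑ j, PiTensorProduct.tprod ℂ (update c j (d₂ (d₁ (c j)))) +
        ∑ j, ∑ k ∈ univ.erase j,
          PiTensorProduct.tprod ℂ (update (update c j (d₁ (c j))) k (d₂ (c k))) := by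
  simp only [derivExt_tprod, map_sum, ← sum_add_distrib]
  refine sum_congr rfl fun j _ => ?_
  rw [← add_sum_erase _ _ (mem_univ j), update_self, update_idem]
  congr 1
  refine sum_congr rfl fun k hk => ?_
  rw [update_of_ne (ne_of_mem_erase hk)]

theorem MultilinearMap.map_update_update_sub_smul_add_smul {R ι V N : Type*} [CommRing R]
    [AddCommGroup V] [Module R V] [AddCommGroup N] [Module R N] [DecidableEq ι]
    (f : MultilinearMap R (fun _ : ι => V) N) (c : ι → V) {j k : ι} (hjk : j ≠ k)
    (x y : V) (a : R) :
    f (update (update c j (x - a • y)) k (x + a • y)) =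
      f (update (update c j x) k x) - (a * a) • f (update (update c j y) k y) +
        a • (f (update (update c j x) k y) - f (update (update c j y) k x)) := by
  have slot_j (z : V) : f (update (update c j (x - a • y)) k z) =
      f (update (update c j x) k z) - a • f (update (update c j y) k z) := by
    simp only [update_comm hjk _ z c, f.map_update_sub, f.map_update_smul]
  rw [f.map_update_add, f.map_update_smul, slot_j, slot_j, smul_sub, smul_smul]
  module

theorem dMinusV3_e0 : dMinusV3 (eV3 0) = eV3 1 - Complex.I • eV3 2 := by
  ext i; fin_cases i <;> simp [dMinusV3, eV3, Matrix.toLin'_apply, Matrix.mulVec, dotProduct,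
    Fin.sum_univ_three]

theorem dPlusV3_e0 : dPlusV3 (eV3 0) = eV3 1 + Complex.I • eV3 2 := by
  ext i; fin_cases i <;> simp [dPlusV3, eV3, Matrix.toLin'_apply, Matrix.mulVec, dotProduct,
    Fin.sum_univ_three]

theorem dPlusV3_dMinusV3_e0 : dPlusV3 (dMinusV3 (eV3 0)) = (2 : ℂ) • eV3 0 := by
  ext i; fin_cases i <;> simp [dPlusV3, dMinusV3, eV3, Matrix.toLin'_apply, Matrix.mulVec,
    dotProduct, Fin.sum_univ_three, one_add_one_eq_two]

noncomputable def pairTensor (b : ℕ) (j k : Fin b) (x y : Fin 3 → ℂ) :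
    ⨂[ℂ] _ : Fin b, (Fin 3 → ℂ) :=
  PiTensorProduct.tprod ℂ (update (update (fun _ => eV3 0) j x) k y)

theorem pairTensor_comm {b : ℕ} {j k : Fin b} (hjk : j ≠ k) (x y : Fin 3 → ℂ) :
    pairTensor b j k x y = pairTensor b k j y x := by
  rw [pairTensor, pairTensor, update_comm hjk]

theorem pairTensor_sub_smul_add_smul {b : ℕ} {j k : Fin b} (hjk : j ≠ k) (x y : Fin 3 → ℂ) :
    pairTensor b j k (x - Complex.I • y) (x + Complex.I • y) =
      pairTensor b j k x x + pairTensor b j k y y +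
        Complex.I • (pairTensor b j k x y - pairTensor b j k y x) := by
  simp only [pairTensor, (PiTensorProduct.tprod ℂ).map_update_update_sub_smul_add_smul _ hjk,
    Complex.I_mul_I, neg_one_smul, sub_neg_eq_add]

theorem sum_pairTensor_sub_smul_add_smul (b : ℕ) (x y : Fin 3 → ℂ) :
    ∑ j : Fin b, ∑ k ∈ univ.erase j, pairTensor b j k (x - Complex.I • y) (x + Complex.I • y) =
      ∑ j : Fin b, ∑ k ∈ univ.erase j, (pairTensor b j k x x + pairTensor b j k y y) := by
  have swap : ∑ j : Fin b, ∑ k ∈ univ.erase j, pairTensor b j k y x =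
      ∑ j : Fin b, ∑ k ∈ univ.erase j, pairTensor b j k x y := by
    rw [sum_sum_erase_swap]
    exact sum_congr rfl fun _ _ => sum_congr rfl fun _ hk =>
      pairTensor_comm (ne_of_mem_erase hk) y x
  calc _ = ∑ j : Fin b, ∑ k ∈ univ.erase j, (pairTensor b j k x x + pairTensor b j k y y +
        Complex.I • (pairTensor b j k x y - pairTensor b j k y x)) :=
        sum_congr rfl fun j _ => sum_congr rfl fun k hk =>
          pairTensor_sub_smul_add_smul (ne_of_mem_erase hk).symm x y
    _ = _ := by simp only [sum_add_distrib, sum_sub_distrib, ← smul_sum, swap, sub_self,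
        smul_zero, add_zero]

theorem insertTheta_comm (b p q : ℕ) : insertTheta b p q = insertTheta b q p := by
  simp only [insertTheta, or_comm]

theorem insertTheta_eq (b : ℕ) (j k : Fin b) :
    insertTheta b j k = (⨂ₜ[ℂ] _ : Fin b, eV3 0) - pairTensor b j k (eV3 1) (eV3 1) -
      pairTensor b j k (eV3 2) (eV3 2) := by
  have (s : Fin 3) : update (update (fun _ => eV3 0) j (eV3 s)) k (eV3 s) =
      fun i : Fin b => if (i : ℕ) = j ∨ (i : ℕ) = k then eV3 s else eV3 0 := by
    ext1 i; simp only [update_apply, Fin.val_inj]; split_ifs <;> tauto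
  simp only [insertTheta, pairTensor, this, ite_self]

theorem derivExt_plus_minus_tprod (b : ℕ) :
    derivExt b dPlusV3 (derivExt b dMinusV3 (⨂ₜ[ℂ] _ : Fin b, eV3 0)) =
      ((2 * b : ℕ) : ℂ) • (⨂ₜ[ℂ] _ : Fin b, eV3 0) +
        ∑ j : Fin b, ∑ k ∈ univ.erase j,
          (pairTensor b j k (eV3 1) (eV3 1) + pairTensor b j k (eV3 2) (eV3 2)) := by
  have fold (j k : Fin b) (x y : Fin 3 → ℂ) :
      PiTensorProduct.tprod ℂ (update (update (fun _ => eV3 0) j x) k y) =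
        pairTensor b j k x y := rfl
  rw [derivExt_derivExt_tprod]
  simp only [dPlusV3_dMinusV3_e0, MultilinearMap.map_update_smul, update_eq_self]
  simp only [dMinusV3_e0, dPlusV3_e0, fold, sum_pairTensor_sub_smul_add_smul]
  rw [sum_const, card_univ, Fintype.card_fin, ← Nat.cast_smul_eq_nsmul ℂ, smul_smul,
    Nat.cast_mul, Nat.cast_ofNat, mul_comm]

-- The paper's positions `(j, k + 1)` for `j ≤ k` and `(k, j)` for `k < j` are, 0-indexed and up to
-- order, the pair `(p, p.succAbove i)` with `p = j - 1`, `i = k - 1`.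
theorem sum_Icc_insertTheta (b : ℕ) :
    ∑ j ∈ Icc 1 b, ∑ k ∈ Icc 1 (b - 1),
        (if j ≤ k then insertTheta b (j - 1) k else insertTheta b (k - 1) (j - 1)) =
      ∑ j : Fin b, ∑ k ∈ univ.erase j, insertTheta b j k := by
  obtain _ | n := b
  · simp
  simp only [sum_Icc_one_eq_sum_fin, Nat.add_sub_cancel, ← Fin.sum_univ_succAbove_eq_sum_erase]
  refine sum_congr rfl fun p _ => sum_congr rfl fun i _ => ?_
  rcases lt_or_ge (Fin.castSucc i) p with h | h
  · rw [Fin.succAbove_of_castSucc_lt _ _ h, if_neg (by simpa [Fin.lt_def] using h),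
      insertTheta_comm]
    simp
  · rw [Fin.succAbove_of_le_castSucc _ _ h, if_pos (by simpa [Fin.le_def] using h)]
    simp

/-- `D₊(D₋(e₁^{⊗b})) = b(b+1)·e₁^{⊗b} − Σ_{j=1}^{b} Σ_{k=1}^{b−1} A_{jk}(e₁^{⊗(b−2)})`,
where `A_{jk}` inserts `θ` at the 1-indexed positions `(j, k+1)` if `j ≤ k` and `(k, j)` if
`k < j`. -/
theorem derivExt_plus_minus_pow (b : ℕ) :
    derivExt b dPlusV3 (derivExt b dMinusV3 (⨂ₜ[ℂ] _ : Fin b, eV3 0)) =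
      ((b * (b + 1) : ℕ) : ℂ) • (⨂ₜ[ℂ] _ : Fin b, eV3 0) -
        ∑ j ∈ Finset.Icc 1 b, ∑ k ∈ Finset.Icc 1 (b - 1),
          (if j ≤ k then insertTheta b (j - 1) k else insertTheta b (k - 1) (j - 1)) := by
  have count : ∑ j : Fin b, ∑ _k ∈ univ.erase j, (⨂ₜ[ℂ] _ : Fin b, eV3 0) =
      ((b * (b - 1) : ℕ) : ℂ) • (⨂ₜ[ℂ] _ : Fin b, eV3 0) := by
    simp only [sum_const, card_erase_of_mem (mem_univ _), card_univ, Fintype.card_fin, smul_smul,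
      ← Nat.cast_smul_eq_nsmul ℂ, Nat.cast_mul]
  have arith : b * (b + 1) = 2 * b + b * (b - 1) := by
    cases b with
    | zero => rfl
    | succ n => rw [Nat.add_sub_cancel]; ring
  rw [derivExt_plus_minus_tprod, sum_Icc_insertTheta]
  simp only [insertTheta_eq, sub_sub, sum_sub_distrib, count, arith, Nat.cast_add, add_smul]
  abel
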